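/- Let B be a Hopf algebra and L a normalized commuting 2-cocycle. Define σ = L∘(id⊗S)∘Δ. Then σ is commuting: (σ⊗id)∘Δ = (id⊗σ)∘Δ. -/
import Mathlib


open TensorProduct Coalgebra

variable {B : Type} [Ring B] [HopfAlgebra ℂ B]

/-- The comultiplication `Λ = (id ⊗ τ ⊗ id) ∘ (Δ ⊗ Δ)` of `B ⊗ B`. -/
noncomputable def Lam : B ⊗[ℂ] B →ₗ[ℂ] (B ⊗[ℂ] B) ⊗[ℂ] (B ⊗[ℂ] B) :=
  (TensorProduct.tensorTensorTensorComm ℂ B B B B).toLinearMap ∘ₗ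
    TensorProduct.map (comul (R := ℂ)) (comul (R := ℂ))

/-- `L ⋆ μ = (L ⊗ μ) ∘ Λ : B ⊗ B → B`. -/
noncomputable def LconvMu (L : B ⊗[ℂ] B →ₗ[ℂ] ℂ) : B ⊗[ℂ] B →ₗ[ℂ] B :=
  (TensorProduct.lid ℂ B).toLinearMap ∘ₗ TensorProduct.map L (LinearMap.mul' ℂ B) ∘ₗ Lam

/-- `μ ⋆ L = (μ ⊗ L) ∘ Λ : B ⊗ B → B`. -/
noncomputable def MuConvL (L : B ⊗[ℂ] B →ₗ[ℂ] ℂ) : B ⊗[ℂ] B →ₗ[ℂ] B :=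
  (TensorProduct.rid ℂ B).toLinearMap ∘ₗ TensorProduct.map (LinearMap.mul' ℂ B) L ∘ₗ Lam

/-- `σ = L ∘ (id ⊗ S) ∘ Δ : B → ℂ`. -/
noncomputable def sigma (L : B ⊗[ℂ] B →ₗ[ℂ] ℂ) : B →ₗ[ℂ] ℂ :=
  L ∘ₗ TensorProduct.map LinearMap.id (HopfAlgebra.antipode (R := ℂ)) ∘ₗ comul (R := ℂ)

open LinearMap

namespace Stmt14Aux

variable {B : Type} [Ring B] [HopfAlgebra ℂ B]
variable {A : Type} [Ring A] [Algebra ℂ A] {A' : Type} [Ring A'] [Algebra ℂ A']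

/-- Convolution product of linear maps `B →ₗ A`. -/
noncomputable def conv (f g : B →ₗ[ℂ] A) : B →ₗ[ℂ] A :=
  LinearMap.mul' ℂ A ∘ₗ TensorProduct.map f g ∘ₗ comul (R := ℂ)

/-- Convolution unit. -/
noncomputable def cUnit : B →ₗ[ℂ] A := Algebra.linearMap ℂ A ∘ₗ counit (R := ℂ)

lemma conv_assoc (f g h : B →ₗ[ℂ] A) : conv (conv f g) h = conv f (conv g h) := by
  have P1 : LinearMap.mul' ℂ A ∘ₗ
      TensorProduct.map (LinearMap.mul' ℂ A ∘ₗ TensorProduct.map f g) h ∘ₗ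
      (TensorProduct.assoc ℂ B B B).symm.toLinearMap
      = LinearMap.mul' ℂ A ∘ₗ TensorProduct.map f (LinearMap.mul' ℂ A ∘ₗ TensorProduct.map g h) := by
    ext x y z
    simp [mul_assoc]
  have hL : conv (conv f g) h
      = LinearMap.mul' ℂ A ∘ₗ
          TensorProduct.map (LinearMap.mul' ℂ A ∘ₗ TensorProduct.map f g) h ∘ₗ
          (comul (R := ℂ) (A := B)).rTensor B ∘ₗ comul (R := ℂ) (A := B) := by
    unfold conv
    rw [← LinearMap.comp_assoc (comul (R := ℂ) (A := B)) (TensorProduct.map f g)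
        (LinearMap.mul' ℂ A), ← map_comp_rTensor]
    simp only [LinearMap.comp_assoc]
  have hR : conv f (conv g h)
      = LinearMap.mul' ℂ A ∘ₗ
          TensorProduct.map f (LinearMap.mul' ℂ A ∘ₗ TensorProduct.map g h) ∘ₗ
          (comul (R := ℂ) (A := B)).lTensor B ∘ₗ comul (R := ℂ) (A := B) := by
    unfold conv
    rw [← LinearMap.comp_assoc (comul (R := ℂ) (A := B)) (TensorProduct.map g h)
        (LinearMap.mul' ℂ A), ← map_comp_lTensor]
    simp only [LinearMap.comp_assoc]
  rw [hL, hR, ← Coalgebra.coassoc_symm]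
  simp only [← LinearMap.comp_assoc] at P1 ⊢
  rw [P1]

lemma conv_cUnit_left (g : B →ₗ[ℂ] A) : conv cUnit g = g := by
  apply LinearMap.ext; intro a
  show LinearMap.mul' ℂ A
    (TensorProduct.map (Algebra.linearMap ℂ A ∘ₗ counit (R := ℂ)) g (comul (R := ℂ) (A := B) a)) = g a
  rw [show TensorProduct.map (Algebra.linearMap ℂ A ∘ₗ counit (R := ℂ)) g
      = TensorProduct.map (Algebra.linearMap ℂ A) g ∘ₗ (counit (R := ℂ) (A := B)).rTensor B from
    (map_comp_rTensor _ _ _ _).symm]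
  rw [LinearMap.comp_apply, Coalgebra.rTensor_counit_comul]
  simp

lemma conv_cUnit_right (f : B →ₗ[ℂ] A) : conv f cUnit = f := by
  apply LinearMap.ext; intro a
  show LinearMap.mul' ℂ A
    (TensorProduct.map f (Algebra.linearMap ℂ A ∘ₗ counit (R := ℂ)) (comul (R := ℂ) (A := B) a)) = f a
  rw [show TensorProduct.map f (Algebra.linearMap ℂ A ∘ₗ counit (R := ℂ))
      = TensorProduct.map f (Algebra.linearMap ℂ A) ∘ₗ (counit (R := ℂ) (A := B)).lTensor B from
    (map_comp_lTensor _ _ _ _).symm]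
  rw [LinearMap.comp_apply, Coalgebra.lTensor_counit_comul]
  simp

lemma conv_algHom (j : A →ₐ[ℂ] A') (f g : B →ₗ[ℂ] A) :
    conv (j.toLinearMap ∘ₗ f) (j.toLinearMap ∘ₗ g) = j.toLinearMap ∘ₗ conv f g := by
  unfold conv
  have P : LinearMap.mul' ℂ A' ∘ₗ TensorProduct.map j.toLinearMap j.toLinearMap
      = j.toLinearMap ∘ₗ LinearMap.mul' ℂ A := by
    ext x y
    simp
  rw [TensorProduct.map_comp]
  simp only [← LinearMap.comp_assoc, P]

lemma algHom_comp_cUnit (j : A →ₐ[ℂ] A') :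
    j.toLinearMap ∘ₗ (cUnit : B →ₗ[ℂ] A) = cUnit := by
  unfold cUnit
  rw [← LinearMap.comp_assoc]
  congr 1
  exact LinearMap.ext fun c => by simp

noncomputable abbrev S : B →ₗ[ℂ] B := HopfAlgebra.antipode (R := ℂ)

lemma conv_S_id : conv (S (B := B)) LinearMap.id = cUnit := by
  unfold conv cUnit
  exact HopfAlgebra.mul_antipode_rTensor_comul

lemma conv_id_S : conv LinearMap.id (S (B := B)) = cUnit := by
  unfold conv cUnit
  exact HopfAlgebra.mul_antipode_lTensor_comul

end Stmt14Aux

namespace Stmt14Aux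

variable {B : Type} [Ring B] [HopfAlgebra ℂ B]

noncomputable abbrev ι₁ : B →ₗ[ℂ] B ⊗[ℂ] B := Algebra.TensorProduct.includeLeft.toLinearMap
noncomputable abbrev ι₂ : B →ₗ[ℂ] B ⊗[ℂ] B :=
  (Algebra.TensorProduct.includeRight (R := ℂ) (A := B) (B := B)).toLinearMap

lemma comul_eq_conv : (comul (R := ℂ) (A := B)) = conv ι₁ ι₂ := by
  unfold conv
  have : LinearMap.mul' ℂ (B ⊗[ℂ] B) ∘ₗ TensorProduct.map (ι₁ (B := B)) ι₂ = LinearMap.id := by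
    ext x y
    simp [Algebra.TensorProduct.tmul_mul_tmul]
  rw [← LinearMap.comp_assoc, this, LinearMap.id_comp]

lemma G_eq_conv : (TensorProduct.comm ℂ B B).toLinearMap ∘ₗ TensorProduct.map S S ∘ₗ
    comul (R := ℂ) = conv (ι₂ ∘ₗ S) (ι₁ ∘ₗ S) := by
  unfold conv
  rw [TensorProduct.map_comp]
  have : LinearMap.mul' ℂ (B ⊗[ℂ] B) ∘ₗ TensorProduct.map (ι₂ (B := B)) ι₁
      = (TensorProduct.comm ℂ B B).toLinearMap := by
    ext x y
    simp [Algebra.TensorProduct.tmul_mul_tmul]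
  simp only [← LinearMap.comp_assoc, this]

lemma comulAlgHom_toLinearMap :
    (Bialgebra.comulAlgHom ℂ B).toLinearMap = comul (R := ℂ) (A := B) := rfl

theorem antipode_comul :
    comul (R := ℂ) ∘ₗ S (B := B)
      = (TensorProduct.comm ℂ B B).toLinearMap ∘ₗ TensorProduct.map S S ∘ₗ comul (R := ℂ) := by
  set j := Bialgebra.comulAlgHom ℂ B with hj
  set G : B →ₗ[ℂ] B ⊗[ℂ] B :=
    (TensorProduct.comm ℂ B B).toLinearMap ∘ₗ TensorProduct.map S S ∘ₗ comul (R := ℂ) with hG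
  have hFΔ : conv (comul (R := ℂ) ∘ₗ S (B := B)) (comul (R := ℂ)) = cUnit := by
    have h := conv_algHom j (S (B := B)) LinearMap.id
    rw [conv_S_id, algHom_comp_cUnit] at h
    simp only [LinearMap.comp_id] at h
    exact h
  have hι₂ : conv (ι₂ (B := B)) (ι₂ ∘ₗ S) = cUnit := by
    have h := conv_algHom (Algebra.TensorProduct.includeRight (R := ℂ) (A := B) (B := B))
      LinearMap.id (S (B := B))
    rw [conv_id_S, algHom_comp_cUnit] at h
    simp only [LinearMap.comp_id] at h
    exact h
  have hι₁ : conv (ι₁ (B := B)) (ι₁ ∘ₗ S) = cUnit := by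
    have h := conv_algHom (Algebra.TensorProduct.includeLeft (R := ℂ) (S := ℂ) (A := B) (B := B))
      LinearMap.id (S (B := B))
    rw [conv_id_S, algHom_comp_cUnit] at h
    simp only [LinearMap.comp_id] at h
    exact h
  have hΔG : conv (comul (R := ℂ)) G = cUnit := by
    rw [hG, G_eq_conv, comul_eq_conv, conv_assoc, ← conv_assoc ι₂, hι₂, conv_cUnit_left, hι₁]
  calc comul (R := ℂ) ∘ₗ S (B := B)
      = conv (comul (R := ℂ) ∘ₗ S (B := B)) cUnit := (conv_cUnit_right _).symm
    _ = conv (comul (R := ℂ) ∘ₗ S (B := B)) (conv (comul (R := ℂ)) G) := by rw [hΔG]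
    _ = conv (conv (comul (R := ℂ) ∘ₗ S (B := B)) (comul (R := ℂ))) G := (conv_assoc _ _ _).symm
    _ = conv cUnit G := by rw [hFΔ]
    _ = G := conv_cUnit_left _

end Stmt14Aux

namespace Stmt14Aux

variable {B : Type} [Ring B] [HopfAlgebra ℂ B]

/-- the twist `τ ∘ (S ⊗ S)` -/
noncomputable def Cw : B ⊗[ℂ] B →ₗ[ℂ] B ⊗[ℂ] B :=
  (TensorProduct.comm ℂ B B).toLinearMap ∘ₗ TensorProduct.map S S

/-- `Φ = (id ⊗ Δ) ∘ Δ` -/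
noncomputable def Phi : B →ₗ[ℂ] B ⊗[ℂ] (B ⊗[ℂ] B) :=
  (comul (R := ℂ) (A := B)).lTensor B ∘ₗ comul (R := ℂ)

lemma stepT' : TensorProduct.map (comul (R := ℂ)) (comul (R := ℂ)) ∘ₗ
      TensorProduct.map (LinearMap.id (M := B)) (S (B := B)) ∘ₗ comul (R := ℂ)
    = TensorProduct.map LinearMap.id (Cw (B := B)) ∘ₗ
      (TensorProduct.assoc ℂ B B (B ⊗[ℂ] B)).symm.toLinearMap ∘ₗ
      (Phi (B := B)).lTensor B ∘ₗ comul (R := ℂ) := by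
  have h1 : TensorProduct.map (comul (R := ℂ)) (comul (R := ℂ)) ∘ₗ
      TensorProduct.map (LinearMap.id (M := B)) (S (B := B))
      = TensorProduct.map LinearMap.id (Cw (B := B)) ∘ₗ
        TensorProduct.map (comul (R := ℂ)) (comul (R := ℂ)) := by
    simp only [← TensorProduct.map_comp]
    congr 1
    rw [antipode_comul]
    unfold Cw
    simp only [LinearMap.comp_assoc]
  have e1 : TensorProduct.map (comul (R := ℂ) (A := B)) (comul (R := ℂ))
      = TensorProduct.map (LinearMap.id (M := B ⊗[ℂ] B)) (comul (R := ℂ)) ∘ₗ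
        (comul (R := ℂ) (A := B)).rTensor B := by
    rw [map_comp_rTensor]
    simp
  have e2 : TensorProduct.map (LinearMap.id (M := B ⊗[ℂ] B)) (comul (R := ℂ) (A := B)) ∘ₗ
      (TensorProduct.assoc ℂ B B B).symm.toLinearMap
      = (TensorProduct.assoc ℂ B B (B ⊗[ℂ] B)).symm.toLinearMap ∘ₗ
        TensorProduct.map LinearMap.id
          (TensorProduct.map LinearMap.id (comul (R := ℂ) (A := B))) := by
    have h := TensorProduct.map_map_comp_assoc_symm_eq (R := ℂ)
      (LinearMap.id (M := B)) (LinearMap.id (M := B)) (comul (R := ℂ) (A := B))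
    simpa using h
  have h2 : TensorProduct.map (comul (R := ℂ) (A := B)) (comul (R := ℂ)) ∘ₗ comul (R := ℂ)
      = (TensorProduct.assoc ℂ B B (B ⊗[ℂ] B)).symm.toLinearMap ∘ₗ
        (Phi (B := B)).lTensor B ∘ₗ comul (R := ℂ) := by
    calc TensorProduct.map (comul (R := ℂ) (A := B)) (comul (R := ℂ)) ∘ₗ comul (R := ℂ)
        = TensorProduct.map (LinearMap.id (M := B ⊗[ℂ] B)) (comul (R := ℂ)) ∘ₗ
          ((comul (R := ℂ) (A := B)).rTensor B ∘ₗ comul (R := ℂ)) := by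
          rw [e1]; simp only [LinearMap.comp_assoc]
      _ = (TensorProduct.map (LinearMap.id (M := B ⊗[ℂ] B)) (comul (R := ℂ)) ∘ₗ
          (TensorProduct.assoc ℂ B B B).symm.toLinearMap) ∘ₗ
          (comul (R := ℂ) (A := B)).lTensor B ∘ₗ comul (R := ℂ) := by
          rw [← Coalgebra.coassoc_symm]; simp only [LinearMap.comp_assoc]
      _ = (TensorProduct.assoc ℂ B B (B ⊗[ℂ] B)).symm.toLinearMap ∘ₗ
          (TensorProduct.map LinearMap.id
            (TensorProduct.map LinearMap.id (comul (R := ℂ) (A := B))) ∘ₗ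
          (comul (R := ℂ) (A := B)).lTensor B ∘ₗ comul (R := ℂ)) := by
          rw [e2]; simp only [LinearMap.comp_assoc]
      _ = (TensorProduct.assoc ℂ B B (B ⊗[ℂ] B)).symm.toLinearMap ∘ₗ
          (Phi (B := B)).lTensor B ∘ₗ comul (R := ℂ) := by
          congr 1
          rw [← LinearMap.comp_assoc]
          congr 1
          show ((comul (R := ℂ) (A := B)).lTensor B).lTensor B ∘ₗ
            (comul (R := ℂ) (A := B)).lTensor B = (Phi (B := B)).lTensor B
          rw [← LinearMap.lTensor_comp]
          rfl
  calc TensorProduct.map (comul (R := ℂ)) (comul (R := ℂ)) ∘ₗ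
      TensorProduct.map (LinearMap.id (M := B)) (S (B := B)) ∘ₗ comul (R := ℂ)
      = (TensorProduct.map (comul (R := ℂ)) (comul (R := ℂ)) ∘ₗ
        TensorProduct.map (LinearMap.id (M := B)) (S (B := B))) ∘ₗ comul (R := ℂ) := by
        simp only [LinearMap.comp_assoc]
    _ = TensorProduct.map LinearMap.id (Cw (B := B)) ∘ₗ
        TensorProduct.map (comul (R := ℂ)) (comul (R := ℂ)) ∘ₗ comul (R := ℂ) := by
        rw [h1]; simp only [LinearMap.comp_assoc]
    _ = TensorProduct.map LinearMap.id (Cw (B := B)) ∘ₗ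
      (TensorProduct.assoc ℂ B B (B ⊗[ℂ] B)).symm.toLinearMap ∘ₗ
      (Phi (B := B)).lTensor B ∘ₗ comul (R := ℂ) := by rw [h2]

end Stmt14Aux

namespace Stmt14Aux

/-- collapse map -/
noncomputable def K : B ⊗[ℂ] (B ⊗[ℂ] B) →ₗ[ℂ] B ⊗[ℂ] B :=
  TensorProduct.map (LinearMap.mul' ℂ B ∘ₗ TensorProduct.map LinearMap.id S) LinearMap.id ∘ₗ
    (TensorProduct.assoc ℂ B B B).symm.toLinearMap

noncomputable def Theta3 (L : B ⊗[ℂ] B →ₗ[ℂ] ℂ) : B ⊗[ℂ] (B ⊗[ℂ] B) →ₗ[ℂ] B :=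
  (TensorProduct.lid ℂ B).toLinearMap ∘ₗ
    TensorProduct.map (L ∘ₗ TensorProduct.map LinearMap.id S) LinearMap.id ∘ₗ
    (TensorProduct.assoc ℂ B B B).symm.toLinearMap ∘ₗ
    ((TensorProduct.comm ℂ B B).toLinearMap).lTensor B

noncomputable def G2 (L : B ⊗[ℂ] B →ₗ[ℂ] ℂ) : B ⊗[ℂ] (B ⊗[ℂ] B) →ₗ[ℂ] B :=
  LinearMap.mul' ℂ B ∘ₗ
    TensorProduct.map (Algebra.linearMap ℂ B ∘ₗ L ∘ₗ TensorProduct.map LinearMap.id S) S ∘ₗ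
    (TensorProduct.assoc ℂ B B B).symm.toLinearMap

lemma KPhi : K ∘ₗ Phi (B := B) = (TensorProduct.mk ℂ B B) 1 := by
  unfold K Phi
  have c1 : (TensorProduct.assoc ℂ B B B).symm.toLinearMap ∘ₗ
      (comul (R := ℂ) (A := B)).lTensor B ∘ₗ comul (R := ℂ)
      = (comul (R := ℂ) (A := B)).rTensor B ∘ₗ comul (R := ℂ) := Coalgebra.coassoc_symm
  simp only [LinearMap.comp_assoc]
  rw [c1, ← LinearMap.comp_assoc, map_comp_rTensor]
  have c2 : (LinearMap.mul' ℂ B ∘ₗ TensorProduct.map LinearMap.id (S (B := B))) ∘ₗ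
      comul (R := ℂ) = Algebra.linearMap ℂ B ∘ₗ counit (R := ℂ) := by
    simp only [LinearMap.comp_assoc]
    exact HopfAlgebra.mul_antipode_lTensor_comul
  rw [c2, ← map_comp_rTensor, LinearMap.comp_assoc, Coalgebra.rTensor_counit_comp_comul]
  ext b
  simp

end Stmt14Aux

namespace Stmt14Aux

lemma A2 (L : B ⊗[ℂ] B →ₗ[ℂ] ℂ) :
    (TensorProduct.lid ℂ B).toLinearMap ∘ₗ TensorProduct.map L (LinearMap.mul' ℂ B) ∘ₗ
      (TensorProduct.tensorTensorTensorComm ℂ B B B B).toLinearMap ∘ₗ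
      TensorProduct.map LinearMap.id (Cw (B := B)) ∘ₗ
      (TensorProduct.assoc ℂ B B (B ⊗[ℂ] B)).symm.toLinearMap
    = Theta3 L ∘ₗ (K (B := B)).lTensor B := by
  ext a b c d
  simp [Cw, Theta3, K, mul_smul_comm, smul_mul_assoc]

lemma A3 (L : B ⊗[ℂ] B →ₗ[ℂ] ℂ) :
    Theta3 L ∘ₗ ((TensorProduct.mk ℂ B B) 1).lTensor B
    = Algebra.linearMap ℂ B ∘ₗ L ∘ₗ TensorProduct.map LinearMap.id (S (B := B)) := by
  ext a c
  simp [Theta3, Algebra.smul_def]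

lemma A4 (L : B ⊗[ℂ] B →ₗ[ℂ] ℂ) :
    (TensorProduct.rid ℂ B).toLinearMap ∘ₗ TensorProduct.map (LinearMap.mul' ℂ B) L ∘ₗ
      (TensorProduct.tensorTensorTensorComm ℂ B B B B).toLinearMap ∘ₗ
      TensorProduct.map LinearMap.id (Cw (B := B)) ∘ₗ
      (TensorProduct.assoc ℂ B B (B ⊗[ℂ] B)).symm.toLinearMap
    = LinearMap.mul' ℂ B ∘ₗ (G2 L).lTensor B := by
  ext a b c d
  simp [Cw, G2, mul_smul_comm, smul_mul_assoc, Algebra.smul_def]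
  rw [← mul_assoc, ← mul_assoc, Algebra.commutes]

end Stmt14Aux

namespace Stmt14Aux

lemma key1 (L : B ⊗[ℂ] B →ₗ[ℂ] ℂ) :
    LconvMu L ∘ₗ TensorProduct.map LinearMap.id (S (B := B)) ∘ₗ comul (R := ℂ)
      = Algebra.linearMap ℂ B ∘ₗ sigma L := by
  unfold LconvMu Lam
  have hA2 := A2 L
  have hA3 := A3 L
  have hKPhi := KPhi (B := B)
  calc ((TensorProduct.lid ℂ B).toLinearMap ∘ₗ
        TensorProduct.map L (LinearMap.mul' ℂ B) ∘ₗ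
        (TensorProduct.tensorTensorTensorComm ℂ B B B B).toLinearMap ∘ₗ
        TensorProduct.map (comul (R := ℂ)) (comul (R := ℂ))) ∘ₗ
        TensorProduct.map LinearMap.id (S (B := B)) ∘ₗ comul (R := ℂ)
      = (TensorProduct.lid ℂ B).toLinearMap ∘ₗ
        TensorProduct.map L (LinearMap.mul' ℂ B) ∘ₗ
        (TensorProduct.tensorTensorTensorComm ℂ B B B B).toLinearMap ∘ₗ
        (TensorProduct.map (comul (R := ℂ)) (comul (R := ℂ)) ∘ₗ
          TensorProduct.map LinearMap.id (S (B := B)) ∘ₗ comul (R := ℂ)) := by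
        simp only [LinearMap.comp_assoc]
    _ = (TensorProduct.lid ℂ B).toLinearMap ∘ₗ
        TensorProduct.map L (LinearMap.mul' ℂ B) ∘ₗ
        (TensorProduct.tensorTensorTensorComm ℂ B B B B).toLinearMap ∘ₗ
        TensorProduct.map LinearMap.id (Cw (B := B)) ∘ₗ
        (TensorProduct.assoc ℂ B B (B ⊗[ℂ] B)).symm.toLinearMap ∘ₗ
        (Phi (B := B)).lTensor B ∘ₗ comul (R := ℂ) := by
        rw [stepT']
    _ = (Theta3 L ∘ₗ (K (B := B)).lTensor B) ∘ₗ (Phi (B := B)).lTensor B ∘ₗ comul (R := ℂ) := by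
        simp only [← LinearMap.comp_assoc] at hA2 ⊢
        rw [hA2]
    _ = Theta3 L ∘ₗ ((TensorProduct.mk ℂ B B) 1).lTensor B ∘ₗ comul (R := ℂ) := by
        simp only [LinearMap.comp_assoc]
        rw [← LinearMap.comp_assoc (comul (R := ℂ) (A := B)) ((Phi (B := B)).lTensor B),
          ← LinearMap.lTensor_comp, hKPhi]
    _ = Algebra.linearMap ℂ B ∘ₗ sigma L := by
        rw [← LinearMap.comp_assoc, hA3]
        unfold sigma
        simp only [LinearMap.comp_assoc]

lemma key2 (L : B ⊗[ℂ] B →ₗ[ℂ] ℂ) :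
    MuConvL L ∘ₗ TensorProduct.map LinearMap.id (S (B := B)) ∘ₗ comul (R := ℂ)
      = LinearMap.mul' ℂ B ∘ₗ (G2 L ∘ₗ Phi (B := B)).lTensor B ∘ₗ comul (R := ℂ) := by
  unfold MuConvL Lam
  have hA4 := A4 L
  calc ((TensorProduct.rid ℂ B).toLinearMap ∘ₗ
        TensorProduct.map (LinearMap.mul' ℂ B) L ∘ₗ
        (TensorProduct.tensorTensorTensorComm ℂ B B B B).toLinearMap ∘ₗ
        TensorProduct.map (comul (R := ℂ)) (comul (R := ℂ))) ∘ₗ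
        TensorProduct.map LinearMap.id (S (B := B)) ∘ₗ comul (R := ℂ)
      = (TensorProduct.rid ℂ B).toLinearMap ∘ₗ
        TensorProduct.map (LinearMap.mul' ℂ B) L ∘ₗ
        (TensorProduct.tensorTensorTensorComm ℂ B B B B).toLinearMap ∘ₗ
        (TensorProduct.map (comul (R := ℂ)) (comul (R := ℂ)) ∘ₗ
          TensorProduct.map LinearMap.id (S (B := B)) ∘ₗ comul (R := ℂ)) := by
        simp only [LinearMap.comp_assoc]
    _ = (TensorProduct.rid ℂ B).toLinearMap ∘ₗ
        TensorProduct.map (LinearMap.mul' ℂ B) L ∘ₗ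
        (TensorProduct.tensorTensorTensorComm ℂ B B B B).toLinearMap ∘ₗ
        TensorProduct.map LinearMap.id (Cw (B := B)) ∘ₗ
        (TensorProduct.assoc ℂ B B (B ⊗[ℂ] B)).symm.toLinearMap ∘ₗ
        (Phi (B := B)).lTensor B ∘ₗ comul (R := ℂ) := by
        rw [stepT']
    _ = (LinearMap.mul' ℂ B ∘ₗ (G2 L).lTensor B) ∘ₗ (Phi (B := B)).lTensor B ∘ₗ comul (R := ℂ) := by
        simp only [← LinearMap.comp_assoc] at hA4 ⊢
        rw [hA4]
    _ = LinearMap.mul' ℂ B ∘ₗ (G2 L ∘ₗ Phi (B := B)).lTensor B ∘ₗ comul (R := ℂ) := by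
        simp only [LinearMap.comp_assoc]
        rw [← LinearMap.comp_assoc (comul (R := ℂ) (A := B)) ((Phi (B := B)).lTensor B),
          ← LinearMap.lTensor_comp]

end Stmt14Aux

namespace Stmt14Aux

variable {A : Type} [Ring A] [Algebra ℂ A]

noncomputable def shat (L : B ⊗[ℂ] B →ₗ[ℂ] ℂ) : B →ₗ[ℂ] B :=
  Algebra.linearMap ℂ B ∘ₗ sigma L

lemma G2Phi (L : B ⊗[ℂ] B →ₗ[ℂ] ℂ) : G2 L ∘ₗ Phi (B := B) = conv (shat L) S := by
  unfold conv
  have hx : TensorProduct.map (shat L) (S (B := B))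
      = TensorProduct.map
          (Algebra.linearMap ℂ B ∘ₗ L ∘ₗ TensorProduct.map LinearMap.id (S (B := B))) S ∘ₗ
        (comul (R := ℂ) (A := B)).rTensor B := by
    rw [map_comp_rTensor]
    unfold shat sigma
    simp only [LinearMap.comp_assoc]
  rw [hx, LinearMap.comp_assoc, Coalgebra.coassoc_symm.symm]
  unfold G2 Phi
  simp only [LinearMap.comp_assoc]

lemma conv_id_G2Phi (L : B ⊗[ℂ] B →ₗ[ℂ] ℂ) :
    LinearMap.mul' ℂ B ∘ₗ (G2 L ∘ₗ Phi (B := B)).lTensor B ∘ₗ comul (R := ℂ)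
      = conv LinearMap.id (conv (shat L) S) := by
  rw [G2Phi]
  rfl

lemma goal_lhs (L : B ⊗[ℂ] B →ₗ[ℂ] ℂ) :
    (TensorProduct.lid ℂ B).toLinearMap ∘ₗ
        TensorProduct.map (sigma L) LinearMap.id ∘ₗ comul (R := ℂ)
      = conv (shat L) LinearMap.id := by
  unfold conv shat
  have PL : LinearMap.mul' ℂ B ∘ₗ
      TensorProduct.map (Algebra.linearMap ℂ B) (LinearMap.id (M := B))
      = (TensorProduct.lid ℂ B).toLinearMap := by
    ext b
    simp [Algebra.smul_def]
  rw [show TensorProduct.map (Algebra.linearMap ℂ B ∘ₗ sigma L) (LinearMap.id (M := B))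
      = TensorProduct.map (Algebra.linearMap ℂ B) LinearMap.id ∘ₗ (sigma L).rTensor B from
    (map_comp_rTensor _ _ _ _).symm]
  simp only [← LinearMap.comp_assoc]
  rw [PL]
  rfl

lemma goal_rhs (L : B ⊗[ℂ] B →ₗ[ℂ] ℂ) :
    (TensorProduct.rid ℂ B).toLinearMap ∘ₗ
        TensorProduct.map LinearMap.id (sigma L) ∘ₗ comul (R := ℂ)
      = conv LinearMap.id (shat L) := by
  unfold conv shat
  have PR : LinearMap.mul' ℂ B ∘ₗ
      TensorProduct.map (LinearMap.id (M := B)) (Algebra.linearMap ℂ B)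
      = (TensorProduct.rid ℂ B).toLinearMap := by
    ext b
    simp [Algebra.smul_def, Algebra.commutes]
  rw [show TensorProduct.map (LinearMap.id (M := B)) (Algebra.linearMap ℂ B ∘ₗ sigma L)
      = TensorProduct.map LinearMap.id (Algebra.linearMap ℂ B) ∘ₗ (sigma L).lTensor B from
    (map_comp_lTensor _ _ _ _).symm]
  simp only [← LinearMap.comp_assoc]
  rw [PR]
  rfl

end Stmt14Aux


open Stmt14Aux in
/-- Let `B` be a Hopf algebra and `L` a normalized commuting 2-cocycle.  Then
`σ = L ∘ (id ⊗ S) ∘ Δ` is commuting: `(σ ⊗ id) ∘ Δ = (id ⊗ σ) ∘ Δ`. -/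
theorem stmt14 (L : B ⊗[ℂ] B →ₗ[ℂ] ℂ)
    (hnorm : L (1 ⊗ₜ[ℂ] 1) = 0)
    (hcomm : LconvMu L = MuConvL L)
    (hcocycle : ∀ a b c : B,
      counit (R := ℂ) a * L (b ⊗ₜ[ℂ] c) - L ((a * b) ⊗ₜ[ℂ] c)
        + L (a ⊗ₜ[ℂ] (b * c)) - L (a ⊗ₜ[ℂ] b) * counit (R := ℂ) c = 0) :
    (TensorProduct.lid ℂ B).toLinearMap ∘ₗ
        TensorProduct.map (sigma L) LinearMap.id ∘ₗ comul (R := ℂ)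
      = (TensorProduct.rid ℂ B).toLinearMap ∘ₗ
          TensorProduct.map LinearMap.id (sigma L) ∘ₗ comul (R := ℂ) := by
  have star : shat L = conv LinearMap.id (conv (shat L) S) := by
    calc shat L = LconvMu L ∘ₗ TensorProduct.map LinearMap.id (S (B := B)) ∘ₗ comul (R := ℂ) :=
          (key1 L).symm
      _ = MuConvL L ∘ₗ TensorProduct.map LinearMap.id (S (B := B)) ∘ₗ comul (R := ℂ) := by
          rw [hcomm]
      _ = LinearMap.mul' ℂ B ∘ₗ (G2 L ∘ₗ Phi (B := B)).lTensor B ∘ₗ comul (R := ℂ) := key2 L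
      _ = conv LinearMap.id (conv (shat L) S) := conv_id_G2Phi L
  rw [goal_lhs L, goal_rhs L]
  calc conv (shat L) LinearMap.id
      = conv (conv LinearMap.id (conv (shat L) S)) LinearMap.id := by rw [← star]
    _ = conv LinearMap.id (conv (conv (shat L) S) LinearMap.id) := conv_assoc _ _ _
    _ = conv LinearMap.id (conv (shat L) (conv S LinearMap.id)) := by rw [conv_assoc]
    _ = conv LinearMap.id (conv (shat L) cUnit) := by rw [conv_S_id]
    _ = conv LinearMap.id (shat L) := by rw [conv_cUnit_right]
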